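/- Every Halin graph has an {L, ⌐}-representation in which exactly one vertex uses a ⌐-shape. Precisely: let T be a finite tree whose leaves are enumerated v_1,…,v_k with k ≥ 3, let r be the unique neighbor of v_k in T, and assume the enumeration is T-planar with respect to r (for every vertex u ≠ r of T, the set {i : u lies on the path in T from v_i to r} is a set of consecutive integers). Let G be the Halin graph obtained from T by adding the cycle edges v_i v_{i+1} for 1 ≤ i < k and the edge v_k v_1. Then there is an assignment v ↦ c(v) of a curve to each vertex of G such that the curve of exactly one vertex is a ⌐-shape and the curve of every other vertex is an L-shape, and for all distinct vertices u, v: c(u) ∩ c(v) ≠ ∅ if and only if u and v are adjacent in G, and c(u) ∩ c(v) contains at most one point. -/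

import Mathlib

/-- An L-shape: a corner at `(x, y)` with one arm extending upward and one arm
extending rightward. -/
def LShape (x y a b : ℝ) : Set (ℝ × ℝ) :=
  ({x} : Set ℝ) ×ˢ Set.Icc y (y + a) ∪ Set.Icc x (x + b) ×ˢ ({y} : Set ℝ)

def IsLShape (c : Set (ℝ × ℝ)) : Prop :=
  ∃ x y a b : ℝ, 0 < a ∧ 0 < b ∧ c = LShape x y a b

/-- A ⌐-shape: a corner at `(x, y)` with one arm extending downward and one arm
extending leftward. -/
def GammaShape (x y a b : ℝ) : Set (ℝ × ℝ) :=
  ({x} : Set ℝ) ×ˢ Set.Icc (y - a) y ∪ Set.Icc (x - b) x ×ˢ ({y} : Set ℝ)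

def IsGammaShape (c : Set (ℝ × ℝ)) : Prop :=
  ∃ x y a b : ℝ, 0 < a ∧ 0 < b ∧ c = GammaShape x y a b

/-- `u` lies on the (unique) path in `T` from `x` to `r`. -/
def OnPath {V : Type*} (T : SimpleGraph V) (u x r : V) : Prop :=
  ∀ p : T.Walk x r, p.IsPath → u ∈ p.support

/-!
Root `T` at `r`; write `d u` for the depth of `u` and `m u` for the largest index of a leaf
below `u`. The vertical arm of `u` stands at abscissa `-(m u + 2⁻¹ ^ d u)`. By planarity the
leaves below a vertex form an interval of indices, so these abscissae place the subtrees of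
every vertex side by side (larger leaf indices to the left) and put a descendant with the same
`m` just to the right of its ancestor.

An inner vertex `u` gets an L with corner at height `-d u`: its vertical arm rises to `1 - d u`,
the height of its parent's horizontal arm, and its horizontal arm runs to its rightmost child,
so it meets exactly the vertical arms of its children. The vertical arms of the leaves reach far
down, and leaf `v i` with `i > 0` realises the cycle edge to `v (i - 1)` by a horizontal arm at
height `i - 2 |V|`, below the whole tree. The closing edge to `v 0` is realised by a ⌐ at `v 0`,
whose arm lies at height `1`, above the tree, and reaches left to `v (k - 1)`, the neighbour of
`r`; the vertical arm of that leaf is raised to height `1`.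
-/

open Set

structure Arms where
  x : ℝ
  bot : ℝ
  top : ℝ
  y : ℝ
  left : ℝ
  right : ℝ

namespace Arms

variable (A B : Arms)

def vert : Set (ℝ × ℝ) := {A.x} ×ˢ Icc A.bot A.top

def horiz : Set (ℝ × ℝ) := Icc A.left A.right ×ˢ {A.y}

def toSet : Set (ℝ × ℝ) := A.vert ∪ A.horiz

def Crosses : Prop := A.left ≤ B.x ∧ B.x ≤ A.right ∧ B.bot ≤ A.y ∧ A.y ≤ B.top

variable {A B}

theorem horiz_inter_vert_subset : A.horiz ∩ B.vert ⊆ {(B.x, A.y)} := by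
  rintro ⟨p, q⟩ ⟨⟨-, hq⟩, hp, -⟩
  simp_all

theorem horiz_inter_vert_nonempty_iff : (A.horiz ∩ B.vert).Nonempty ↔ A.Crosses B := by
  constructor
  · rintro ⟨⟨p, q⟩, ⟨⟨hl, hr⟩, hq⟩, hp, hb, ht⟩
    simp only [mem_singleton_iff] at hp hq
    subst hp hq
    exact ⟨hl, hr, hb, ht⟩
  · rintro ⟨hl, hr, hb, ht⟩
    exact ⟨(B.x, A.y), ⟨⟨hl, hr⟩, rfl⟩, rfl, hb, ht⟩

theorem vert_disjoint (h : A.x ≠ B.x) : Disjoint A.vert B.vert :=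
  disjoint_left.2 fun _ ⟨hp, _⟩ ⟨hp', _⟩ => h (hp.symm.trans hp')

theorem horiz_disjoint (h : A.y ≠ B.y ∨ A.right < B.left ∨ B.right < A.left) :
    Disjoint A.horiz B.horiz := by
  refine disjoint_left.2 fun p ⟨⟨hl, hr⟩, hq⟩ ⟨⟨hl', hr'⟩, hq'⟩ => ?_
  simp only [mem_singleton_iff] at hq hq'
  rcases h with h | h | h
  · exact h (hq.symm.trans hq')
  · linarith
  · linarith

theorem toSet_inter (hv : Disjoint A.vert B.vert) (hh : Disjoint A.horiz B.horiz) :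
    A.toSet ∩ B.toSet = A.horiz ∩ B.vert ∪ B.horiz ∩ A.vert := by
  simp only [toSet, union_inter_distrib_right, inter_union_distrib_left, hv.inter_eq,
    hh.inter_eq, empty_union, union_empty]
  rw [inter_comm A.vert, union_comm]

theorem toSet_inter_nonempty_iff (hv : Disjoint A.vert B.vert) (hh : Disjoint A.horiz B.horiz) :
    (A.toSet ∩ B.toSet).Nonempty ↔ A.Crosses B ∨ B.Crosses A := by
  rw [toSet_inter hv hh, union_nonempty, horiz_inter_vert_nonempty_iff,
    horiz_inter_vert_nonempty_iff]

theorem toSet_inter_subsingleton (hv : Disjoint A.vert B.vert) (hh : Disjoint A.horiz B.horiz)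
    (h : ¬(A.Crosses B ∧ B.Crosses A)) : (A.toSet ∩ B.toSet).Subsingleton := by
  rw [toSet_inter hv hh]
  rw [← horiz_inter_vert_nonempty_iff, ← horiz_inter_vert_nonempty_iff, not_and_or,
    not_nonempty_iff_eq_empty, not_nonempty_iff_eq_empty] at h
  rcases h with h | h <;> rw [h]
  · simpa using subsingleton_singleton.anti horiz_inter_vert_subset
  · simpa using subsingleton_singleton.anti horiz_inter_vert_subset

theorem isLShape_toSet (hy : A.y = A.bot) (hl : A.left = A.x) (hv : A.bot < A.top)
    (hh : A.x < A.right) : IsLShape A.toSet :=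
  ⟨A.x, A.bot, A.top - A.bot, A.right - A.x, sub_pos.2 hv, sub_pos.2 hh, by
    simp [toSet, vert, horiz, LShape, hy, hl]⟩

theorem isGammaShape_toSet (hy : A.y = A.top) (hr : A.right = A.x) (hv : A.bot < A.top)
    (hh : A.left < A.x) : IsGammaShape A.toSet :=
  ⟨A.x, A.top, A.top - A.bot, A.x - A.left, sub_pos.2 hv, sub_pos.2 hh, by
    simp [toSet, vert, horiz, GammaShape, hy, hr]⟩

end Arms

noncomputable def xPos (a d : ℕ) : ℝ := -(a + 2⁻¹ ^ d)

theorem xPos_le_xPos_iff {a b d e : ℕ} :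
    xPos a d ≤ xPos b e ↔ b ≤ a ∧ (b = a → d ≤ e) := by
  have hd : (0 : ℝ) < 2⁻¹ ^ d := by positivity
  have he : (0 : ℝ) < 2⁻¹ ^ e := by positivity
  have hd' : (2⁻¹ : ℝ) ^ d ≤ 1 := pow_le_one₀ (by norm_num) (by norm_num)
  have he' : (2⁻¹ : ℝ) ^ e ≤ 1 := pow_le_one₀ (by norm_num) (by norm_num)
  unfold xPos
  rcases lt_trichotomy b a with h | rfl | h
  · have : (b : ℝ) + 1 ≤ a := by exact_mod_cast h
    simp only [h.le, h.ne, true_and, false_imp_iff, iff_true]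
    linarith
  · rw [neg_le_neg_iff, add_le_add_iff_left, pow_le_pow_iff_right_of_lt_one₀ (by norm_num)
      (by norm_num)]
    simp
  · have : (a : ℝ) + 1 ≤ b := by exact_mod_cast h
    simp only [h.not_ge, false_and, iff_false, not_le]
    linarith

theorem xPos_lt_xPos_iff {a b d e : ℕ} :
    xPos a d < xPos b e ↔ b ≤ a ∧ (b = a → d < e) := by
  rw [← not_le, xPos_le_xPos_iff]
  omega

theorem xPos_inj {a b d e : ℕ} : xPos a d = xPos b e ↔ a = b ∧ d = e := by
  refine ⟨fun h => ?_, fun ⟨rfl, rfl⟩ => rfl⟩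
  obtain ⟨h1, h2⟩ := xPos_le_xPos_iff.1 h.le
  obtain ⟨h3, h4⟩ := xPos_le_xPos_iff.1 h.ge
  have hab : a = b := le_antisymm h3 h1
  exact ⟨hab, le_antisymm (h2 hab.symm) (h4 hab)⟩

namespace SimpleGraph

variable {V : Type*} {T : SimpleGraph V}

theorem Walk.IsPath.eq_or_eq_of_degree_eq_one {x y w : V} [Fintype (T.neighborSet w)]
    {p : T.Walk x y} (hp : p.IsPath) (hw : w ∈ p.support) (hdeg : T.degree w = 1) :
    w = x ∨ w = y := by
  by_contra! hne
  obtain ⟨q, s, rfl⟩ := Walk.mem_support_iff_exists_append.1 hw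
  have hq : ¬q.Nil := fun h => hne.1 h.eq.symm
  have hs : ¬s.Nil := fun h => hne.2 h.eq
  obtain ⟨a, -, ha⟩ := degree_eq_one_iff_existsUnique_adj.1 hdeg
  have hnd := hp.support_nodup
  rw [Walk.support_append, List.nodup_append] at hnd
  exact hnd.2.2 _ (q.getVert_mem_support _) _ (s.snd_mem_tail_support hs)
    ((ha _ (q.adj_penultimate hq).symm).trans (ha _ (s.adj_snd hs)).symm)

theorem onPath_self (x r : V) : OnPath T x x r := fun p _ => p.start_mem_support

theorem onPath_root (x r : V) : OnPath T r x r := fun p _ => p.end_mem_support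

def IsChild (T : SimpleGraph V) (r u z : V) : Prop :=
  OnPath T u z r ∧ T.dist z r = T.dist u r + 1

namespace IsTree

variable (hT : T.IsTree) {a b r u w x z : V}
include hT

theorem onPath_of_mem_support {p : T.Walk x r} (hp : p.IsPath) (hu : u ∈ p.support) :
    OnPath T u x r := by
  intro q hq
  rwa [(hT.existsUnique_path x r).unique hq hp]

theorem onPath_iff_dist : OnPath T u x r ↔ T.dist x u + T.dist u r = T.dist x r := by
  constructor
  · intro h
    obtain ⟨p, hp, hlen⟩ := hT.connected.exists_path_of_dist x r
    obtain ⟨q, s, rfl⟩ := Walk.mem_support_iff_exists_append.1 (h p hp)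
    have := hT.connected.dist_triangle (u := x) (v := u) (w := r)
    have := dist_le q
    have := dist_le s
    rw [Walk.length_append] at hlen
    omega
  · intro h
    obtain ⟨q, hq⟩ := hT.connected.exists_walk_length_eq_dist x u
    obtain ⟨s, hs⟩ := hT.connected.exists_walk_length_eq_dist u r
    have hp := (q.append s).isPath_of_length_eq_dist (by rw [Walk.length_append]; omega)
    exact hT.onPath_of_mem_support hp
      ((Walk.mem_support_append_iff _ _).2 (.inr s.start_mem_support))

theorem dist_le_of_onPath (h : OnPath T u x r) : T.dist u r ≤ T.dist x r := by
  have := (hT.onPath_iff_dist).1 h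
  omega

theorem onPath_trans (h₁ : OnPath T w u r) (h₂ : OnPath T u x r) : OnPath T w x r := by
  rw [hT.onPath_iff_dist] at *
  have := hT.connected.dist_triangle (u := x) (v := u) (w := w)
  have := hT.connected.dist_triangle (u := x) (v := w) (w := r)
  omega

theorem eq_of_onPath_of_dist_le (h : OnPath T u x r) (hd : T.dist x r ≤ T.dist u r) : u = x := by
  have := (hT.onPath_iff_dist).1 h
  exact ((hT.connected.dist_eq_zero_iff).1 (by omega)).symm

theorem onPath_total (hu : OnPath T u x r) (hz : OnPath T z x r) :
    OnPath T u z r ∨ OnPath T z u r := by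
  obtain ⟨p, hp⟩ := hT.connected.exists_path_of_dist x r |>.imp fun _ h => h.1
  obtain ⟨q, s, rfl⟩ := Walk.mem_support_iff_exists_append.1 (hu p hp)
  rcases (Walk.mem_support_append_iff _ _).1 (hz _ hp) with hzq | hzs
  · obtain ⟨q₁, q₂, rfl⟩ := Walk.mem_support_iff_exists_append.1 hzq
    rw [← Walk.append_assoc] at hp
    exact .inl (hT.onPath_of_mem_support hp.of_append_right
      ((Walk.mem_support_append_iff _ _).2 (.inr s.start_mem_support)))
  · exact .inr (hT.onPath_of_mem_support hp.of_append_right hzs)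

theorem eq_of_onPath_of_onPath_of_dist_eq (hu : OnPath T u x r) (hz : OnPath T z x r)
    (hd : T.dist u r = T.dist z r) : u = z := by
  rcases hT.onPath_total hu hz with h | h
  · exact hT.eq_of_onPath_of_dist_le h hd.ge
  · exact (hT.eq_of_onPath_of_dist_le h hd.le).symm

theorem adj_iff_isChild_or_isChild : T.Adj u z ↔ T.IsChild r u z ∨ T.IsChild r z u := by
  constructor
  · intro h
    have h1 : T.dist u z = 1 := dist_eq_one_iff_adj.2 h
    have h2 : T.dist z u = 1 := dist_eq_one_iff_adj.2 h.symm
    obtain ⟨p, hp, -⟩ := hT.connected.exists_path_of_dist u r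
    by_cases hz : z ∈ p.support
    · have hzu := hT.onPath_of_mem_support hp hz
      have := (hT.onPath_iff_dist).1 hzu
      exact .inr ⟨hzu, by omega⟩
    · have huz : OnPath T u z r := hT.onPath_of_mem_support (hp.cons (h := h.symm) hz)
        (List.mem_cons_of_mem _ p.start_mem_support)
      have := (hT.onPath_iff_dist).1 huz
      exact .inl ⟨huz, by omega⟩
  · rintro (⟨h, hd⟩ | ⟨h, hd⟩)
    · have := (hT.onPath_iff_dist).1 h
      exact (dist_eq_one_iff_adj.1 (by omega)).symm
    · have := (hT.onPath_iff_dist).1 h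
      exact dist_eq_one_iff_adj.1 (by omega)

theorem eq_of_isChild_of_isChild (ha : T.IsChild r a u) (hb : T.IsChild r b u) : a = b :=
  hT.eq_of_onPath_of_onPath_of_dist_eq ha.1 hb.1 (by have := ha.2; have := hb.2; omega)

theorem dist_lt_card [Fintype V] (x r : V) : T.dist x r < Fintype.card V := by
  obtain ⟨p, hp, hlen⟩ := hT.connected.exists_path_of_dist x r
  exact hlen ▸ hp.length_lt

theorem eq_of_onPath_of_degree_eq_one [Fintype (T.neighborSet w)] (hw : T.degree w = 1)
    (hwr : w ≠ r) (h : OnPath T w x r) : w = x := by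
  obtain ⟨p, hp, -⟩ := hT.connected.exists_path_of_dist x r
  exact (hp.eq_or_eq_of_degree_eq_one (h p hp) hw).resolve_right hwr

variable [Fintype V] [DecidableRel T.Adj] [Nontrivial V]

theorem exists_isChild (r : V) (h : T.degree u ≠ 1) : ∃ z, T.IsChild r u z := by
  have hpos := hT.connected.preconnected.degree_pos_of_nontrivial u
  obtain ⟨a, ha, b, hb, hab⟩ := Finset.one_lt_card.1
    (by rw [card_neighborFinset_eq_degree]; omega : 1 < (T.neighborFinset u).card)
  rw [mem_neighborFinset] at ha hb
  by_contra! hno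
  exact hab (hT.eq_of_isChild_of_isChild
    ((hT.adj_iff_isChild_or_isChild.1 ha).resolve_left (hno a))
    ((hT.adj_iff_isChild_or_isChild.1 hb).resolve_left (hno b)))

theorem exists_degree_eq_one_onPath (r u : V) : ∃ w, T.degree w = 1 ∧ OnPath T u w r := by
  classical
  obtain ⟨w, hw, hmax⟩ := Finset.exists_max_image (Finset.univ.filter (OnPath T u · r))
    (T.dist · r) ⟨u, by simpa using onPath_self u r⟩
  rw [Finset.mem_filter] at hw
  by_contra! hno
  obtain ⟨z, hz, hd⟩ := hT.exists_isChild r fun h => hno w h hw.2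
  have := hmax z (by simpa using hT.onPath_trans hw.2 hz)
  omega

end IsTree

end SimpleGraph

open SimpleGraph

def cyclicPred {k : ℕ} (j : Fin k) : Fin k :=
  if j.val = 0 then ⟨k - 1, by have := j.isLt; omega⟩
  else ⟨j.val - 1, by have := j.isLt; omega⟩

theorem add_one_eq_iff_eq_cyclicPred {k : ℕ} (h : 1 < k) {i j : Fin k} :
    i + ⟨1, h⟩ = j ↔ i = cyclicPred j := by
  rw [Fin.ext_iff, Fin.ext_iff, Fin.val_add, cyclicPred]
  rcases Nat.lt_or_ge (i.val + 1) k with hi | hi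
  · rw [Nat.mod_eq_of_lt hi]
    split_ifs <;> simp <;> omega
  · rw [show i.val + 1 = k by omega, Nat.mod_self]
    split_ifs <;> simp <;> omega

theorem cyclicPred_cyclicPred_ne {k : ℕ} (hk : 3 ≤ k) (j : Fin k) :
    cyclicPred (cyclicPred j) ≠ j := by
  have := j.isLt
  unfold cyclicPred
  split_ifs <;> simp_all [Fin.ext_iff] <;> omega

theorem exists_sym2_eq_add_one_iff {α : Type*} {k : ℕ} (h : 1 < k) (v : Fin k → α) (u z : α) :
    (∃ i : Fin k, s(u, z) = s(v i, v (i + ⟨1, h⟩))) ↔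
      (∃ j, u = v j ∧ z = v (cyclicPred j)) ∨ ∃ j, z = v j ∧ u = v (cyclicPred j) := by
  have hsucc (i j : Fin k) := add_one_eq_iff_eq_cyclicPred h (i := i) (j := j)
  simp only [Sym2.eq_iff]
  constructor
  · rintro ⟨i, ⟨rfl, rfl⟩ | ⟨rfl, rfl⟩⟩
    · exact .inr ⟨_, rfl, by rw [← (hsucc i _).1 rfl]⟩
    · exact .inl ⟨_, rfl, by rw [← (hsucc i _).1 rfl]⟩
  · rintro (⟨j, rfl, rfl⟩ | ⟨j, rfl, rfl⟩)
    · exact ⟨cyclicPred j, .inr ⟨by rw [(hsucc _ j).2 rfl], rfl⟩⟩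
    · exact ⟨cyclicPred j, .inl ⟨rfl, by rw [(hsucc _ j).2 rfl]⟩⟩

section

variable {V : Type*} {k : ℕ}

structure IsPlanarLeafOrder [Fintype V] (T : SimpleGraph V) [DecidableRel T.Adj] (r : V)
    (v : Fin k → V) : Prop where
  isTree : T.IsTree
  three_le : 3 ≤ k
  injective : Function.Injective v
  degree_eq_one : ∀ i, T.degree (v i) = 1
  exists_eq_of_degree_eq_one : ∀ u, T.degree u = 1 → ∃ i, u = v i
  adj_root : T.Adj (v ⟨k - 1, Nat.sub_one_lt_of_lt three_le⟩) r
  planar : ∀ u, u ≠ r → ∀ i j l : Fin k, i ≤ j → j ≤ l →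
    OnPath T u (v i) r → OnPath T u (v l) r → OnPath T u (v j) r

variable {T : SimpleGraph V} {r : V} {v : Fin k → V}

open Classical in
noncomputable def maxLeaf (T : SimpleGraph V) (r : V) (v : Fin k → V) (u : V) : ℕ :=
  (Finset.univ.filter fun i => OnPath T u (v i) r).sup (fun i : Fin k => (i : ℕ))

noncomputable def minChildMaxLeaf (T : SimpleGraph V) (r : V) (v : Fin k → V) (u : V) : ℕ :=
  sInf (maxLeaf T r v '' {z | T.IsChild r u z})

theorem le_maxLeaf {u : V} {i : Fin k} (h : OnPath T u (v i) r) :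
    (i : ℕ) ≤ maxLeaf T r v u := by
  classical
  exact Finset.le_sup (f := fun i : Fin k => (i : ℕ)) (by simpa using h)

theorem minChildMaxLeaf_le {u z : V} (h : T.IsChild r u z) :
    minChildMaxLeaf T r v u ≤ maxLeaf T r v z :=
  Nat.sInf_le ⟨z, h, rfl⟩

namespace IsPlanarLeafOrder

variable [Fintype V] [DecidableRel T.Adj] (H : IsPlanarLeafOrder T r v) {u x z : V}
include H

theorem one_lt : 1 < k := by have := H.three_le; omega

def first : Fin k := ⟨0, by have := H.three_le; omega⟩

def last : Fin k := ⟨k - 1, by have := H.three_le; omega⟩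

theorem nontrivial : Nontrivial V :=
  ⟨v H.first, v H.last, fun h => by
    have := congrArg Fin.val (H.injective h)
    simp [first, last] at this
    have := H.three_le
    omega⟩

theorem ne_root (i : Fin k) : v i ≠ r := by
  intro hir
  obtain ⟨j, hjm, hjl⟩ : ∃ j : Fin k, j ≠ i ∧ j ≠ H.last := by
    have := H.three_le
    refine ⟨⟨if i.val = 0 then 1 else 0, by split_ifs <;> omega⟩, ?_, ?_⟩ <;>
      simp only [ne_eq, Fin.ext_iff, last] <;> split_ifs <;> omega
  obtain ⟨p, hp, -⟩ := H.isTree.connected.exists_path_of_dist (v j) r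
  have hnil : ¬p.Nil := fun h => hjm (H.injective (h.eq.trans hir.symm))
  have hpen : p.penultimate = v H.last := by
    obtain ⟨a, -, ha⟩ := degree_eq_one_iff_existsUnique_adj.1 (hir ▸ H.degree_eq_one i)
    exact (ha _ (p.adj_penultimate hnil).symm).trans (ha _ H.adj_root.symm).symm
  rcases hp.eq_or_eq_of_degree_eq_one (hpen ▸ p.getVert_mem_support _) (H.degree_eq_one H.last)
    with h | h
  · exact hjl (H.injective h).symm
  · exact H.adj_root.ne h

theorem eq_of_onPath_leaf {i : Fin k} (h : OnPath T (v i) x r) : v i = x :=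
  H.isTree.eq_of_onPath_of_degree_eq_one (H.degree_eq_one i) (H.ne_root i) h

theorem onPath_leaf_leaf_iff {i j : Fin k} : OnPath T (v i) (v j) r ↔ i = j :=
  ⟨fun h => H.injective (H.eq_of_onPath_leaf h), by rintro rfl; exact onPath_self _ _⟩

theorem not_isChild_leaf (i : Fin k) : ¬T.IsChild r (v i) z := fun ⟨h, hd⟩ => by
  rw [← H.eq_of_onPath_leaf h] at hd
  omega

theorem exists_onPath_leaf (u : V) : ∃ i, OnPath T u (v i) r := by
  have := H.nontrivial
  obtain ⟨w, hw, hu⟩ := H.isTree.exists_degree_eq_one_onPath r u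
  obtain ⟨i, rfl⟩ := H.exists_eq_of_degree_eq_one w hw
  exact ⟨i, hu⟩

theorem exists_isChild (hu : u ∉ Set.range v) : ∃ z, T.IsChild r u z := by
  have := H.nontrivial
  refine H.isTree.exists_isChild r fun h => hu ?_
  obtain ⟨i, rfl⟩ := H.exists_eq_of_degree_eq_one u h
  exact ⟨i, rfl⟩

theorem onPath_of_le_of_le {i j l : Fin k} (hi : OnPath T u (v i) r) (hl : OnPath T u (v l) r)
    (hij : i ≤ j) (hjl : j ≤ l) : OnPath T u (v j) r := by
  by_cases hu : u = r
  · exact hu ▸ onPath_root _ _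
  · exact H.planar u hu i j l hij hjl hi hl

theorem dist_last : T.dist (v H.last) r = 1 := dist_eq_one_iff_adj.2 H.adj_root

theorem dist_leaf_pos (i : Fin k) : 0 < T.dist (v i) r :=
  H.isTree.connected.pos_dist_of_ne (H.ne_root i)

theorem exists_maxLeaf (u : V) : ∃ i, OnPath T u (v i) r ∧ (i : ℕ) = maxLeaf T r v u := by
  classical
  obtain ⟨i, hi⟩ := H.exists_onPath_leaf u
  obtain ⟨j, hj, hje⟩ := Finset.exists_mem_eq_sup
    (Finset.univ.filter fun i => OnPath T u (v i) r) ⟨i, by simpa using hi⟩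
    (fun i : Fin k => (i : ℕ))
  exact ⟨j, by simpa using hj, hje.symm⟩

theorem maxLeaf_le_of_onPath (h : OnPath T u z r) : maxLeaf T r v z ≤ maxLeaf T r v u := by
  obtain ⟨i, hi, hie⟩ := H.exists_maxLeaf z
  exact hie ▸ le_maxLeaf (H.isTree.onPath_trans h hi)

theorem maxLeaf_leaf (i : Fin k) : maxLeaf T r v (v i) = i := by
  obtain ⟨j, hj, hje⟩ := H.exists_maxLeaf (v i)
  rw [← hje, (H.onPath_leaf_leaf_iff).1 hj]

theorem maxLeaf_root : maxLeaf T r v r = k - 1 := by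
  obtain ⟨j, -, hje⟩ := H.exists_maxLeaf r
  have := le_maxLeaf (v := v) (onPath_root (T := T) (v H.last) r)
  simp only [last] at this
  omega

theorem eq_of_maxLeaf_eq (hd : T.dist u r = T.dist z r)
    (hm : maxLeaf T r v u = maxLeaf T r v z) : u = z := by
  obtain ⟨i, hi, hie⟩ := H.exists_maxLeaf u
  obtain ⟨j, hj, hje⟩ := H.exists_maxLeaf z
  obtain rfl : i = j := Fin.ext (by omega)
  exact H.isTree.eq_of_onPath_of_onPath_of_dist_eq hi hj hd

theorem exists_minChildMaxLeaf (hu : u ∉ Set.range v) :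
    ∃ z, T.IsChild r u z ∧ maxLeaf T r v z = minChildMaxLeaf T r v u := by
  obtain ⟨z, hz⟩ := H.exists_isChild hu
  exact Nat.sInf_mem (s := maxLeaf T r v '' {z | T.IsChild r u z}) ⟨_, z, hz, rfl⟩

theorem minChildMaxLeaf_le_maxLeaf (hu : u ∉ Set.range v) :
    minChildMaxLeaf T r v u ≤ maxLeaf T r v u := by
  obtain ⟨z, hz, he⟩ := H.exists_minChildMaxLeaf hu
  exact he ▸ H.maxLeaf_le_of_onPath hz.1

theorem onPath_of_minChildMaxLeaf_le (hu : u ∉ Set.range v) (j : Fin k)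
    (h₁ : minChildMaxLeaf T r v u ≤ j) (h₂ : j ≤ maxLeaf T r v u) : OnPath T u (v j) r := by
  obtain ⟨z, hz, he⟩ := H.exists_minChildMaxLeaf hu
  obtain ⟨i, hi, hie⟩ := H.exists_maxLeaf z
  obtain ⟨l, hl, hle⟩ := H.exists_maxLeaf u
  exact H.onPath_of_le_of_le (H.isTree.onPath_trans hz.1 hi) hl (Fin.le_def.2 (by omega))
    (Fin.le_def.2 (by omega))

theorem maxLeaf_lt_minChildMaxLeaf (hu : u ∉ Set.range v) (hd : T.dist u r = T.dist z r)
    (hne : u ≠ z) (h : maxLeaf T r v z < maxLeaf T r v u) :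
    maxLeaf T r v z < minChildMaxLeaf T r v u := by
  by_contra! h'
  obtain ⟨j, hj, hje⟩ := H.exists_maxLeaf z
  exact hne (H.isTree.eq_of_onPath_of_onPath_of_dist_eq
    (H.onPath_of_minChildMaxLeaf_le hu j (hje ▸ h') (hje ▸ h.le)) hj hd)

end IsPlanarLeafOrder

noncomputable def xCoord (T : SimpleGraph V) (r : V) (v : Fin k → V) (u : V) : ℝ :=
  xPos (maxLeaf T r v u) (T.dist u r)

noncomputable def leafHeight (V : Type*) [Fintype V] (j : Fin k) : ℝ :=
  j - 2 * Fintype.card V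

noncomputable def innerArms (T : SimpleGraph V) (r : V) (v : Fin k → V) (u : V) : Arms where
  x := xCoord T r v u
  bot := -(T.dist u r : ℝ)
  top := 1 - T.dist u r
  y := -(T.dist u r : ℝ)
  left := xCoord T r v u
  right := xPos (minChildMaxLeaf T r v u) (T.dist u r + 1)

noncomputable def leafArms [Fintype V] (T : SimpleGraph V) (r : V) (v : Fin k → V) (j : Fin k) :
    Arms :=
  if j.val = 0 then
    { x := xCoord T r v (v j), bot := leafHeight V j, top := 1, y := 1,
      left := xCoord T r v (v (cyclicPred j)), right := xCoord T r v (v j) }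
  else
    { x := xCoord T r v (v j), bot := leafHeight V j,
      top := if j.val = k - 1 then 1 else 1 - T.dist (v j) r, y := leafHeight V j,
      left := xCoord T r v (v j), right := xCoord T r v (v (cyclicPred j)) }

open Classical in
noncomputable def arms [Fintype V] (T : SimpleGraph V) (r : V) (v : Fin k → V) (u : V) : Arms :=
  if h : u ∈ Set.range v then leafArms T r v h.choose else innerArms T r v u

section

variable [Fintype V] {u : V} {j : Fin k}

theorem leafArms_x : (leafArms T r v j).x = xCoord T r v (v j) := by
  unfold leafArms; split_ifs <;> rfl

theorem leafArms_bot : (leafArms T r v j).bot = leafHeight V j := by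
  unfold leafArms; split_ifs <;> rfl

theorem leafArms_y : (leafArms T r v j).y = if j.val = 0 then 1 else leafHeight V j := by
  unfold leafArms; split_ifs <;> rfl

theorem arms_of_not_mem_range (hu : u ∉ Set.range v) : arms T r v u = innerArms T r v u :=
  dif_neg hu

theorem arms_leaf (hv : Function.Injective v) (j : Fin k) :
    arms T r v (v j) = leafArms T r v j := by
  have h : v j ∈ Set.range v := ⟨j, rfl⟩
  rw [arms, dif_pos h, hv h.choose_spec]

theorem arms_x (hv : Function.Injective v) (u : V) : (arms T r v u).x = xCoord T r v u := by
  by_cases hu : u ∈ Set.range v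
  · obtain ⟨j, rfl⟩ := hu
    rw [arms_leaf hv, leafArms_x]
  · rw [arms_of_not_mem_range hu]
    rfl

end

namespace IsPlanarLeafOrder

variable [Fintype V] [DecidableRel T.Adj] (H : IsPlanarLeafOrder T r v) {u z : V}
include H

theorem cyclicPred_first : cyclicPred H.first = H.last := by
  simp [cyclicPred, first, last]

theorem leafHeight_lt (j : Fin k) (w : V) : leafHeight V j < -(T.dist w r : ℝ) := by
  have h₁ := Fintype.card_le_of_injective v H.injective
  have h₂ := H.isTree.dist_lt_card w r
  rw [Fintype.card_fin] at h₁
  have : (j : ℝ) + T.dist w r + 2 ≤ 2 * Fintype.card V := by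
    exact_mod_cast (by omega : (j : ℕ) + T.dist w r + 2 ≤ 2 * Fintype.card V)
  unfold leafHeight
  linarith

theorem arms_bot_le (u : V) : (arms T r v u).bot ≤ -(T.dist u r : ℝ) := by
  by_cases hu : u ∈ Set.range v
  · obtain ⟨j, rfl⟩ := hu
    rw [arms_leaf H.injective, leafArms_bot]
    exact (H.leafHeight_lt j _).le
  · rw [arms_of_not_mem_range hu]
    rfl

theorem one_sub_le_arms_top (u : V) : 1 - (T.dist u r : ℝ) ≤ (arms T r v u).top := by
  by_cases hu : u ∈ Set.range v
  · obtain ⟨j, rfl⟩ := hu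
    rw [arms_leaf H.injective]
    unfold leafArms
    split_ifs <;> simp
  · rw [arms_of_not_mem_range hu]
    rfl

theorem dist_le_of_le_arms_top (hz : z ≠ v H.first)
    (h : -(T.dist u r : ℝ) ≤ (arms T r v z).top) :
    T.dist z r ≤ T.dist u r + 1 := by
  by_cases hz' : z ∈ Set.range v
  · obtain ⟨j, rfl⟩ := hz'
    have hj : j.val ≠ 0 := fun h => hz (congrArg v (Fin.ext h))
    rw [arms_leaf H.injective] at h
    simp only [leafArms, if_neg hj] at h
    split_ifs at h with hl
    · rw [show j = H.last from Fin.ext hl, H.dist_last]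
      omega
    · exact_mod_cast (by linarith : (T.dist (v j) r : ℝ) ≤ T.dist u r + 1)
  · rw [arms_of_not_mem_range hz'] at h
    simp only [innerArms] at h
    exact_mod_cast (by linarith : (T.dist z r : ℝ) ≤ T.dist u r + 1)

theorem crosses_innerArms_iff (hu : u ∉ Set.range v) (hne : u ≠ z) :
    (innerArms T r v u).Crosses (arms T r v z) ↔ T.IsChild r u z := by
  simp only [Arms.Crosses, innerArms, arms_x H.injective, xCoord]
  constructor
  · rintro ⟨h₁, h₂, -, h₄⟩
    obtain ⟨hm₁, ht₁⟩ := xPos_le_xPos_iff.1 h₁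
    obtain ⟨hm₂, ht₂⟩ := xPos_le_xPos_iff.1 h₂
    have hdesc : OnPath T u z r := by
      obtain ⟨i, hi, hie⟩ := H.exists_maxLeaf z
      refine (H.isTree.onPath_total (H.onPath_of_minChildMaxLeaf_le hu i (hie ▸ hm₂)
        (hie ▸ hm₁)) hi).resolve_right fun h => hne ?_
      exact (H.isTree.eq_of_onPath_of_dist_le h
        (ht₁ (le_antisymm hm₁ (H.maxLeaf_le_of_onPath h)))).symm
    have hlt : T.dist u r < T.dist z r := lt_of_le_of_ne (H.isTree.dist_le_of_onPath hdesc)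
      fun h => hne (H.isTree.eq_of_onPath_of_dist_le hdesc h.ge)
    refine ⟨hdesc, le_antisymm ?_ hlt⟩
    -- the vertical arm of `v H.first` reaches height `1`; its depth is bounded by the abscissa
    by_cases hz : z = v H.first
    · have : maxLeaf T r v z = 0 := hz ▸ H.maxLeaf_leaf H.first
      exact ht₂ (by omega)
    · exact H.dist_le_of_le_arms_top hz h₄
  · rintro ⟨hdesc, hd⟩
    refine ⟨xPos_le_xPos_iff.2 ⟨H.maxLeaf_le_of_onPath hdesc, fun _ => by omega⟩,
      xPos_le_xPos_iff.2 ⟨minChildMaxLeaf_le ⟨hdesc, hd⟩, fun _ => hd.le⟩,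
      (H.arms_bot_le z).trans ?_, le_trans (le_of_eq ?_) (H.one_sub_le_arms_top z)⟩
    · rw [hd]
      push_cast
      linarith
    · rw [hd]
      push_cast
      ring

theorem crosses_leafArms_iff_of_ne_zero {j : Fin k} (hj : j.val ≠ 0) (hne : z ≠ v j) :
    (leafArms T r v j).Crosses (arms T r v z) ↔ z = v (cyclicPred j) := by
  have hp : (cyclicPred j : ℕ) = j - 1 := by simp [cyclicPred, hj]
  simp only [Arms.Crosses, leafArms, if_neg hj, arms_x H.injective, xCoord]
  constructor
  · rintro ⟨h₁, h₂, h₃, -⟩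
    by_cases hz : z ∈ Set.range v
    · obtain ⟨m, rfl⟩ := hz
      rw [arms_leaf H.injective, leafArms_bot, leafHeight, leafHeight] at h₃
      rw [H.maxLeaf_leaf, H.maxLeaf_leaf] at h₁ h₂
      have hmj : (m : ℕ) ≤ j := by exact_mod_cast (by linarith : (m : ℝ) ≤ j)
      have hmj' : m ≠ j := fun h => hne (h ▸ rfl)
      have := (xPos_le_xPos_iff.1 h₂).1
      exact congrArg v (Fin.ext (by rw [Fin.ne_iff_vne] at hmj'; omega))
    · rw [arms_of_not_mem_range hz] at h₃
      exact absurd h₃ (not_le.2 (H.leafHeight_lt j z))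
  · rintro rfl
    rw [H.maxLeaf_leaf, H.maxLeaf_leaf, arms_leaf H.injective, leafArms_bot]
    refine ⟨xPos_le_xPos_iff.2 ⟨by omega, by omega⟩, le_rfl, ?_, ?_⟩
    · unfold leafHeight
      have : ((cyclicPred j : ℕ) : ℝ) ≤ j := by
        exact_mod_cast (by omega : (cyclicPred j : ℕ) ≤ j)
      linarith
    · have h₁ := H.leafHeight_lt j (v (cyclicPred j))
      have h₂ := H.one_sub_le_arms_top (v (cyclicPred j))
      rw [arms_leaf H.injective] at h₂
      linarith

theorem crosses_leafArms_first_iff (hne : z ≠ v H.first) :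
    (leafArms T r v H.first).Crosses (arms T r v z) ↔ z = v H.last := by
  simp only [Arms.Crosses, leafArms, if_pos (show H.first.val = 0 from rfl), H.cyclicPred_first,
    arms_x H.injective, xCoord]
  constructor
  · rintro ⟨h₁, -, -, h₄⟩
    by_cases hz : z ∈ Set.range v
    · obtain ⟨m, rfl⟩ := hz
      rw [arms_leaf H.injective] at h₄
      unfold leafArms at h₄
      split_ifs at h₄ with hm hl
      · exact absurd (congrArg v (Fin.ext hm)) hne
      · exact congrArg v (Fin.ext hl)
      · have : (0 : ℝ) < T.dist (v m) r := by exact_mod_cast H.dist_leaf_pos m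
        simp only at h₄
        linarith
    · -- `r` also reaches height `1`, but stands to the left of `v H.last`
      rw [arms_of_not_mem_range hz] at h₄
      have hzr : z = r := by
        simp only [innerArms] at h₄
        exact (H.isTree.connected.dist_eq_zero_iff).1
          (Nat.le_zero.1 (by exact_mod_cast (by linarith : (T.dist z r : ℝ) ≤ 0)))
      subst hzr
      rw [H.maxLeaf_leaf, H.maxLeaf_root] at h₁
      have := (xPos_le_xPos_iff.1 h₁).2 rfl
      rw [H.dist_last, SimpleGraph.dist_self] at this
      omega
  · rintro rfl
    have hl : H.last.val ≠ 0 := by have := H.three_le; simp [last]; omega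
    rw [H.maxLeaf_leaf, H.maxLeaf_leaf, arms_leaf H.injective, leafArms_bot]
    refine ⟨le_rfl, xPos_le_xPos_iff.2 ⟨Nat.zero_le _, fun h => absurd h.symm hl⟩, ?_, ?_⟩
    · have := H.leafHeight_lt H.last r
      rw [SimpleGraph.dist_self] at this
      push_cast at this
      linarith
    · simp only [leafArms, if_neg hl]
      simp [last]

theorem crosses_leafArms_iff {j : Fin k} (hne : z ≠ v j) :
    (leafArms T r v j).Crosses (arms T r v z) ↔ z = v (cyclicPred j) := by
  by_cases hj : j.val = 0
  · obtain rfl : j = H.first := Fin.ext hj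
    rw [H.cyclicPred_first]
    exact H.crosses_leafArms_first_iff hne
  · exact H.crosses_leafArms_iff_of_ne_zero hj hne

theorem crosses_arms_iff (hne : u ≠ z) :
    (arms T r v u).Crosses (arms T r v z) ↔
      T.IsChild r u z ∨ ∃ j, u = v j ∧ z = v (cyclicPred j) := by
  by_cases hu : u ∈ Set.range v
  · obtain ⟨j, rfl⟩ := hu
    rw [arms_leaf H.injective, H.crosses_leafArms_iff hne.symm]
    simp [H.not_isChild_leaf, H.injective.eq_iff]
  · rw [arms_of_not_mem_range hu, H.crosses_innerArms_iff hu hne]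
    refine (or_iff_left ?_).symm
    rintro ⟨j, rfl, -⟩
    exact hu ⟨j, rfl⟩

theorem halin_adj_iff (hne : u ≠ z) :
    (T ⊔ fromEdgeSet {e | ∃ i : Fin k, e = s(v i, v (i + ⟨1, H.one_lt⟩))}).Adj u z ↔
      (arms T r v u).Crosses (arms T r v z) ∨ (arms T r v z).Crosses (arms T r v u) := by
  rw [H.crosses_arms_iff hne, H.crosses_arms_iff hne.symm, sup_adj, fromEdgeSet_adj,
    Set.mem_ofPred_eq, exists_sym2_eq_add_one_iff H.one_lt, H.isTree.adj_iff_isChild_or_isChild (r := r)]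
  simp only [ne_eq, hne, not_false_eq_true, and_true]
  exact or_or_or_comm

theorem not_crosses_and_crosses (hne : u ≠ z) :
    ¬((arms T r v u).Crosses (arms T r v z) ∧ (arms T r v z).Crosses (arms T r v u)) := by
  rw [H.crosses_arms_iff hne, H.crosses_arms_iff hne.symm]
  rintro ⟨hc | ⟨i, rfl, rfl⟩, hc' | ⟨j, hj, hj'⟩⟩
  · have := hc.2
    have := hc'.2
    omega
  · rw [hj'] at hc
    exact H.not_isChild_leaf _ hc
  · exact H.not_isChild_leaf _ hc'
  · rw [H.injective.eq_iff] at hj hj'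
    exact cyclicPred_cyclicPred_ne H.three_le j (by rw [← hj', hj])

theorem arms_vert_disjoint (hne : u ≠ z) : Disjoint (arms T r v u).vert (arms T r v z).vert := by
  refine Arms.vert_disjoint ?_
  rw [arms_x H.injective, arms_x H.injective, xCoord, xCoord, Ne, xPos_inj]
  exact fun ⟨hm, hd⟩ => hne (H.eq_of_maxLeaf_eq hd hm)

theorem arms_y_ne_of_mem_range (hne : u ≠ z) (hu : u ∈ Set.range v) :
    (arms T r v u).y ≠ (arms T r v z).y := by
  obtain ⟨j, rfl⟩ := hu
  have hneg : ∀ m : Fin k, leafHeight V m < 0 := fun m => by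
    simpa using H.leafHeight_lt m r
  rw [arms_leaf H.injective, leafArms_y]
  by_cases hz : z ∈ Set.range v
  · obtain ⟨m, rfl⟩ := hz
    have hjm : (j : ℕ) ≠ m := fun h => hne (congrArg v (Fin.ext h))
    rw [arms_leaf H.injective, leafArms_y]
    split_ifs with hj hm hm
    · omega
    · exact ((hneg m).trans one_pos).ne'
    · exact ((hneg j).trans one_pos).ne
    · intro h
      unfold leafHeight at h
      exact hjm (by exact_mod_cast (by linarith : (j : ℝ) = m))
  · rw [arms_of_not_mem_range hz]
    have := H.leafHeight_lt j z
    simp only [innerArms]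
    split_ifs <;> intro h <;> linarith [(T.dist z r).cast_nonneg (α := ℝ)]

theorem arms_horiz_disjoint (hne : u ≠ z) :
    Disjoint (arms T r v u).horiz (arms T r v z).horiz := by
  apply Arms.horiz_disjoint
  by_cases hu : u ∈ Set.range v
  · exact .inl (H.arms_y_ne_of_mem_range hne hu)
  by_cases hz : z ∈ Set.range v
  · exact .inl (H.arms_y_ne_of_mem_range hne.symm hz).symm
  rw [arms_of_not_mem_range hu, arms_of_not_mem_range hz]
  simp only [innerArms, xCoord]
  by_cases hd : T.dist u r = T.dist z r
  · right
    rcases lt_or_gt_of_ne fun hm => hne (H.eq_of_maxLeaf_eq hd hm) with h | h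
    · have := H.maxLeaf_lt_minChildMaxLeaf hz hd.symm hne.symm h
      exact .inr (xPos_lt_xPos_iff.2 ⟨this.le, fun h' => absurd h' this.ne⟩)
    · have := H.maxLeaf_lt_minChildMaxLeaf hu hd hne h
      exact .inl (xPos_lt_xPos_iff.2 ⟨this.le, fun h' => absurd h' this.ne⟩)
  · exact .inl fun h => hd (by exact_mod_cast neg_inj.1 h)

theorem isLShape_arms (hu : u ≠ v H.first) : IsLShape (arms T r v u).toSet := by
  by_cases hu' : u ∈ Set.range v
  · obtain ⟨j, rfl⟩ := hu'
    have hj : j.val ≠ 0 := fun h => hu (congrArg v (Fin.ext h))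
    have hp : (cyclicPred j : ℕ) = j - 1 := by simp [cyclicPred, hj]
    rw [arms_leaf H.injective]
    refine Arms.isLShape_toSet ?_ ?_ ?_ ?_ <;> simp only [leafArms, if_neg hj]
    · have h₁ := H.leafHeight_lt j (v j)
      split_ifs <;> linarith [(T.dist (v j) r).cast_nonneg (α := ℝ)]
    · rw [xCoord, xCoord, H.maxLeaf_leaf, H.maxLeaf_leaf]
      exact xPos_lt_xPos_iff.2 ⟨by omega, by omega⟩
  · rw [arms_of_not_mem_range hu']
    refine Arms.isLShape_toSet rfl rfl (by simp [innerArms]) ?_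
    exact xPos_lt_xPos_iff.2 ⟨H.minChildMaxLeaf_le_maxLeaf hu', fun _ => Nat.lt_succ_self _⟩

theorem isGammaShape_arms_first : IsGammaShape (arms T r v (v H.first)).toSet := by
  have hl : H.last.val ≠ 0 := by have := H.three_le; simp [last]; omega
  rw [arms_leaf H.injective]
  refine Arms.isGammaShape_toSet ?_ ?_ ?_ ?_ <;>
    simp only [leafArms, if_pos (show H.first.val = 0 from rfl), H.cyclicPred_first]
  · simpa using H.leafHeight_lt H.first r |>.trans_le (by simp)
  · rw [xCoord, xCoord, H.maxLeaf_leaf, H.maxLeaf_leaf]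
    exact xPos_lt_xPos_iff.2 ⟨Nat.zero_le _, fun h => absurd h.symm hl⟩

end IsPlanarLeafOrder

end

theorem halin_graph_has_L_Gamma_representation
    {V : Type*} [Fintype V]
    (T : SimpleGraph V) [DecidableRel T.Adj] (hT : T.IsTree)
    (k : ℕ) (hk : 3 ≤ k)
    (v : Fin k → V) (hv : Function.Injective v)
    (hleaf : ∀ i : Fin k, T.degree (v i) = 1)
    (hleaves : ∀ u : V, T.degree u = 1 → ∃ i : Fin k, u = v i)
    (r : V) (hr : T.Adj (v ⟨k - 1, by omega⟩) r)
    -- the enumeration of the leaves is `T`-planar with respect to `r`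
    (hplanar : ∀ u : V, u ≠ r → ∀ i j l : Fin k, i ≤ j → j ≤ l →
      OnPath T u (v i) r → OnPath T u (v l) r → OnPath T u (v j) r)
    (G : SimpleGraph V)
    (hG : G = T ⊔ SimpleGraph.fromEdgeSet
      {e | ∃ i : Fin k, e = s(v i, v (i + (⟨1, by omega⟩ : Fin k)))}) :
    ∃ c : V → Set (ℝ × ℝ), ∃ w : V,
      IsGammaShape (c w) ∧ (∀ u : V, u ≠ w → IsLShape (c u)) ∧
      ∀ u u' : V, u ≠ u' →
        (((c u ∩ c u').Nonempty ↔ G.Adj u u') ∧ (c u ∩ c u').Subsingleton) := by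
  have H : IsPlanarLeafOrder T r v := ⟨hT, hk, hv, hleaf, hleaves, hr, hplanar⟩
  subst hG
  refine ⟨fun u => (arms T r v u).toSet, v H.first, H.isGammaShape_arms_first,
    fun u hu => H.isLShape_arms hu, fun u z hne => ⟨?_, ?_⟩⟩
  · rw [Arms.toSet_inter_nonempty_iff (H.arms_vert_disjoint hne) (H.arms_horiz_disjoint hne)]
    exact (H.halin_adj_iff hne).symm
  · exact Arms.toSet_inter_subsingleton (H.arms_vert_disjoint hne) (H.arms_horiz_disjoint hne)
      (H.not_crosses_and_crosses hne)
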